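/- Let f : ℝ → ℝ be strictly convex and let (a,b), (c,d) be two distinct points in ℝ² with a ≠ c. Then there is at most one pair (u,v) ∈ ℝ² such that both points lie on the translated graph {(x + u, f(x) + v) : x ∈ ℝ}. -/
import Mathlib

private lemma aux_sum (f : ℝ → ℝ) (hf : StrictConvexOn ℝ Set.univ f) {w x y z : ℝ}
    (hwx : w < x) (hxy : x ≤ y) (hyz : y < z) (hsum : w + z = x + y) :
    f x + f y < f w + f z := by
  rcases eq_or_lt_of_le hxy with rfl | hxy
  · have hwz : w ≠ z := by linarith
    have key := hf.2 (Set.mem_univ w) (Set.mem_univ z) hwz (by norm_num : (0:ℝ) < 1/2)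
      (by norm_num : (0:ℝ) < 1/2) (by norm_num)
    have hx : (1/2 : ℝ) • w + (1/2 : ℝ) • z = x := by
      simp only [smul_eq_mul]; linarith
    rw [hx] at key
    simp only [smul_eq_mul] at key
    linarith
  · have h1 := hf.slope_strict_mono_adjacent (Set.mem_univ w) (Set.mem_univ y) hwx hxy
    have h2 := hf.slope_strict_mono_adjacent (Set.mem_univ x) (Set.mem_univ z) hxy hyz
    have h12 : (f x - f w) / (x - w) < (f z - f y) / (z - y) := h1.trans h2
    have hd : x - w = z - y := by linarith
    rw [hd] at h12
    have hpos : (0:ℝ) < z - y := by linarith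
    have := (div_lt_div_iff_of_pos_right hpos).mp h12
    linarith

private lemma aux_ne (f : ℝ → ℝ) (hf : StrictConvexOn ℝ Set.univ f) {p q s : ℝ}
    (hpq : p ≠ q) (hs : 0 < s) : f (p + s) - f p ≠ f (q + s) - f q := by
  wlog h : p < q generalizing p q
  · exact fun heq => (this hpq.symm (hpq.lt_or_gt.resolve_left h)) heq.symm
  intro heq
  rcases le_or_gt (p + s) q with hle | hlt
  · have := aux_sum f hf (show p < p + s by linarith) hle (show q < q + s by linarith)
      (by ring)
    linarith
  · have := aux_sum f hf h hlt.le (show p + s < q + s by linarith) (by ring)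
    linarith

theorem stmt_11 (f : ℝ → ℝ) (hf : StrictConvexOn ℝ Set.univ f)
    (a b c d : ℝ) (hac : a ≠ c) :
    ∀ u v u' v' : ℝ,
      (b = f (a - u) + v ∧ d = f (c - u) + v) →
      (b = f (a - u') + v' ∧ d = f (c - u') + v') →
      (u, v) = (u', v') := by
  intro u v u' v' ⟨h1, h2⟩ ⟨h3, h4⟩
  have huu : u = u' := by
    by_contra hne
    have hkey : f (a - u) - f (a - u') = f (c - u) - f (c - u') := by linarith
    have hpq : a - u' ≠ c - u' := fun h => hac (by linarith)
    rcases lt_or_gt_of_ne hne with h | h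
    · -- u < u', so s = u' - u > 0; a - u = (a - u') + s
      have := aux_ne f hf hpq (show 0 < u' - u by linarith)
      apply this
      have e1 : a - u' + (u' - u) = a - u := by ring
      have e2 : c - u' + (u' - u) = c - u := by ring
      rw [e1, e2]; linarith
    · have hpq' : a - u ≠ c - u := fun hh => hac (by linarith)
      have := aux_ne f hf hpq' (show 0 < u - u' by linarith)
      apply this
      have e1 : a - u + (u - u') = a - u' := by ring
      have e2 : c - u + (u - u') = c - u' := by ring
      rw [e1, e2]; linarith
  subst huu
  have : v = v' := by linarith
  subst this
  rfl
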